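/- arXiv:1112.3837 — 2 statements merged into one kernel-verified Lean document; each statement's English description precedes it below -/
import Mathlib

section
/- For every set X and all φ, ψ : X → Σ, the pointwise disjunction χ defined by χ(x) = φ(x) ∨ ψ(x) is a binary join of φ and ψ in the preorder (X → Σ, ≤): φ ≤ χ, ψ ≤ χ, and every ρ : X → Σ with φ ≤ ρ and ψ ≤ ρ satisfies χ ≤ ρ. -/
open CategoryTheory Encodable Denumerable

namespace Herbrand

/-- Kleene application in Kleene's first pca `K₁`: `e · n`. -/
def kap (e n : ℕ) : Part ℕ := Nat.Partrec.Code.eval (ofNat Nat.Partrec.Code e) n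

/-- `kapIn r n S` : `r · n` is defined and its value lies in `S`. -/
def kapIn (r n : ℕ) (S : Set ℕ) : Prop := ∃ v ∈ kap r n, v ∈ S

/-- The list coded by a natural number (canonical bijection `ℕ ≃ List ℕ`). -/
def toL (n : ℕ) : List ℕ := ofNat (List ℕ) n

/-- The code of a list of natural numbers. -/
def ofL (l : List ℕ) : ℕ := encode l

@[simp] lemma toL_ofL (l : List ℕ) : toL (ofL l) = l := ofNat_encode l

/-- `!A` : the set of codes of lists all of whose entries lie in `A`. -/
def bang (A : Set ℕ) : Set ℕ := {n | ∀ x ∈ toL n, x ∈ A}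

/-- `m ⪯ n` : every entry of the list coded by `m` is an entry of the list coded by `n`. -/
def sle (m n : ℕ) : Prop := ∀ x ∈ toL m, x ∈ toL n

lemma sle_refl (m : ℕ) : sle m m := fun _ hx => hx

lemma sle_trans {m n k : ℕ} (h1 : sle m n) (h2 : sle n k) : sle m k :=
  fun x hx => h2 x (h1 x hx)

/-- `S` is upward closed in `!A`. -/
def UpwardClosedIn (A S : Set ℕ) : Prop :=
  ∀ m ∈ S, ∀ n ∈ bang A, sle m n → n ∈ S

/-- `↑_{!A} S` : the set of `n ∈ !A` with `m ⪯ n` for some `m ∈ S`. -/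
def upClo (A S : Set ℕ) : Set ℕ := {n | n ∈ bang A ∧ ∃ m ∈ S, sle m n}

lemma mem_bang_univ (n : ℕ) : n ∈ bang Set.univ := fun x _ => Set.mem_univ x

/-- From a partial recursive function we get a `K₁`-code for it. -/
theorem exists_kap_eq {f : ℕ →. ℕ} (hf : Nat.Partrec f) : ∃ e, ∀ n, kap e n = f n := by
  obtain ⟨c, hc⟩ := Nat.Partrec.Code.exists_code.mp hf
  exact ⟨encode c, fun n => by simp [kap, hc]⟩


/-- A pair of sets of numbers: candidate Herbrand truth value `(X₀, X₁)`. -/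
structure HPair where
  act : Set ℕ
  pot : Set ℕ

/-- `X` is a Herbrand truth value (an element of `Σ`): `X₀ ⊆ !X₁` and
`X₀` is upward closed in `!X₁`. -/
def HPair.IsSigma (X : HPair) : Prop :=
  X.act ⊆ bang X.pot ∧ UpwardClosedIn X.pot X.act

/-- The preorder on `X → Σ` of the Herbrand tripos. -/
def hle {X : Type} (φ ψ : X → HPair) : Prop :=
  ∃ r : ℕ, ∀ x : X, ∀ n : ℕ,
    (n ∈ bang (φ x).pot → kapIn r n (bang (ψ x).pot)) ∧
    (n ∈ (φ x).act → kapIn r n (ψ x).act)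

/-- `A & B = {Nat.pair 0 a : a ∈ A} ∪ {Nat.pair 1 b : b ∈ B}`. -/
def amp (A B : Set ℕ) : Set ℕ :=
  (fun a => Nat.pair 0 a) '' A ∪ (fun b => Nat.pair 1 b) '' B

/-- `m_A`: the code of the list of all `a` with `Nat.pair 0 a` an entry of the list coded
by `m`. -/
def projL (m : ℕ) : ℕ :=
  ofL ((toL m).filterMap fun p => if p.unpair.1 = 0 then some p.unpair.2 else none)

/-- `m_B`: the code of the list of all `b` with `Nat.pair 1 b` an entry of the list coded
by `m`. -/
def projR (m : ℕ) : ℕ :=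
  ofL ((toL m).filterMap fun p => if p.unpair.1 = 1 then some p.unpair.2 else none)

/-- Conjunction of Herbrand truth values. -/
def conj (A B : HPair) : HPair where
  act := {m | m ∈ bang (amp A.pot B.pot) ∧ projL m ∈ A.act ∧ projR m ∈ B.act}
  pot := amp A.pot B.pot

/-- Disjunction of Herbrand truth values. -/
def disj (A B : HPair) : HPair where
  act := {m | m ∈ bang (amp A.pot B.pot) ∧ (projL m ∈ A.act ∨ projR m ∈ B.act)}
  pot := amp A.pot B.pot

/-- The potential realizers of an implication. -/
def implPot (A B : HPair) : Set ℕ := {c | ∀ m ∈ bang A.pot, kapIn c m (bang B.pot)}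

/-- Implication of Herbrand truth values. -/
def impl (A B : HPair) : HPair where
  act := upClo (implPot A B)
    {n | ∃ c, n = ofL [c] ∧ c ∈ implPot A B ∧ ∀ m ∈ A.act, kapIn c m B.act}
  pot := implPot A B

/-- The bottom Herbrand truth value `(∅, ∅)`. -/
def bot : HPair := ⟨∅, ∅⟩

/-- Negation of Herbrand truth values: `¬A = A → (∅, ∅)`. -/
def neg (A : HPair) : HPair := impl A bot


lemma ofL_toL (n : ℕ) : ofL (toL n) = n := encode_ofNat n

/-- Left injection on codes of lists: tag every entry with `0`. -/
def injL (n : ℕ) : ℕ := ofL ((toL n).map (Nat.pair 0))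

/-- Right injection on codes of lists: tag every entry with `1`. -/
def injR (n : ℕ) : ℕ := ofL ((toL n).map (Nat.pair 1))

lemma projL_injL (n : ℕ) : projL (injL n) = n := by
  simp [projL, injL, toL_ofL, List.filterMap_map, Function.comp_def, Nat.unpair_pair, ofL_toL]

lemma projR_injR (n : ℕ) : projR (injR n) = n := by
  simp [projR, injR, toL_ofL, List.filterMap_map, Function.comp_def, Nat.unpair_pair, ofL_toL]

lemma injL_mem_bang {A B : Set ℕ} {n : ℕ} (hn : n ∈ bang A) : injL n ∈ bang (amp A B) := by
  intro x hx
  rw [injL, toL_ofL] at hx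
  rcases List.mem_map.mp hx with ⟨a, ha, rfl⟩
  exact Or.inl ⟨a, hn a ha, rfl⟩

lemma injR_mem_bang {A B : Set ℕ} {n : ℕ} (hn : n ∈ bang B) : injR n ∈ bang (amp A B) := by
  intro x hx
  rw [injR, toL_ofL] at hx
  rcases List.mem_map.mp hx with ⟨b, hb, rfl⟩
  exact Or.inr ⟨b, hn b hb, rfl⟩

lemma projL_mem_bang {A B : Set ℕ} {m : ℕ} (hm : m ∈ bang (amp A B)) : projL m ∈ bang A := by
  intro x hx
  rw [projL, toL_ofL] at hx
  rcases List.mem_filterMap.mp hx with ⟨p, hp, hsome⟩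
  rcases hm p hp with ⟨a, ha, rfl⟩ | ⟨b, hb, rfl⟩
  · simp [Nat.unpair_pair] at hsome; subst hsome; exact ha
  · simp [Nat.unpair_pair] at hsome

lemma projR_mem_bang {A B : Set ℕ} {m : ℕ} (hm : m ∈ bang (amp A B)) : projR m ∈ bang B := by
  intro x hx
  rw [projR, toL_ofL] at hx
  rcases List.mem_filterMap.mp hx with ⟨p, hp, hsome⟩
  rcases hm p hp with ⟨a, ha, rfl⟩ | ⟨b, hb, rfl⟩
  · simp [Nat.unpair_pair] at hsome
  · simp [Nat.unpair_pair] at hsome; subst hsome; exact hb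

lemma injL_primrec : Primrec injL :=
  Primrec.encode.comp <| Primrec.list_map (Primrec.ofNat (List ℕ))
    (Primrec₂.natPair.comp (Primrec.const 0) Primrec.snd)

lemma injR_primrec : Primrec injR :=
  Primrec.encode.comp <| Primrec.list_map (Primrec.ofNat (List ℕ))
    (Primrec₂.natPair.comp (Primrec.const 1) Primrec.snd)

lemma projL_primrec : Primrec projL :=
  Primrec.encode.comp <| Primrec.listFilterMap (Primrec.ofNat (List ℕ)) <|
    Primrec.to₂ <| Primrec.ite
      (Primrec.eq.comp (Primrec.fst.comp (Primrec.unpair.comp Primrec.snd)) (Primrec.const 0))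
      (Primrec.option_some.comp (Primrec.snd.comp (Primrec.unpair.comp Primrec.snd)))
      (Primrec.const none)

lemma projR_primrec : Primrec projR :=
  Primrec.encode.comp <| Primrec.listFilterMap (Primrec.ofNat (List ℕ)) <|
    Primrec.to₂ <| Primrec.ite
      (Primrec.eq.comp (Primrec.fst.comp (Primrec.unpair.comp Primrec.snd)) (Primrec.const 1))
      (Primrec.option_some.comp (Primrec.snd.comp (Primrec.unpair.comp Primrec.snd)))
      (Primrec.const none)

lemma exists_kap_of_primrec {f : ℕ → ℕ} (hf : Primrec f) :
    ∃ e, ∀ n, kap e n = Part.some (f n) := by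
  obtain ⟨e, he⟩ := exists_kap_eq (Partrec.nat_iff.mp hf.to_comp.partrec)
  exact ⟨e, fun n => by rw [he]; rfl⟩

lemma kap_partrec (r : ℕ) : Partrec (kap r) :=
  Nat.Partrec.Code.eval_part.comp (Computable.const _) Computable.id

/-- pointwise disjunction is a binary join in the preorder `(X → Σ, ≤)`. -/
theorem disj_is_binary_join {X : Type} (φ ψ : X → HPair)
    (hφ : ∀ x, (φ x).IsSigma) (hψ : ∀ x, (ψ x).IsSigma) :
    hle φ (fun x => disj (φ x) (ψ x)) ∧
    hle ψ (fun x => disj (φ x) (ψ x)) ∧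
    ∀ ρ : X → HPair, (∀ x, (ρ x).IsSigma) →
      hle φ ρ → hle ψ ρ → hle (fun x => disj (φ x) (ψ x)) ρ := by
  refine ⟨?_, ?_, ?_⟩
  · -- φ ≤ φ ∨ ψ via injL
    obtain ⟨e, he⟩ := exists_kap_of_primrec injL_primrec
    refine ⟨e, fun x n => ⟨fun hn => ?_, fun hn => ?_⟩⟩
    · exact ⟨injL n, by rw [he]; exact Part.mem_some _, injL_mem_bang hn⟩
    · refine ⟨injL n, by rw [he]; exact Part.mem_some _,
        injL_mem_bang ((hφ x).1 hn), Or.inl ?_⟩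
      rw [projL_injL]; exact hn
  · -- ψ ≤ φ ∨ ψ via injR
    obtain ⟨e, he⟩ := exists_kap_of_primrec injR_primrec
    refine ⟨e, fun x n => ⟨fun hn => ?_, fun hn => ?_⟩⟩
    · exact ⟨injR n, by rw [he]; exact Part.mem_some _, injR_mem_bang hn⟩
    · refine ⟨injR n, by rw [he]; exact Part.mem_some _,
        injR_mem_bang ((hψ x).1 hn), Or.inr ?_⟩
      rw [projR_injR]; exact hn
  · rintro ρ hρ ⟨r, hr⟩ ⟨s, hs⟩
    -- the realizer: m ↦ ofL (toL (r · (projL m)) ++ toL (s · (projR m)))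
    set F : ℕ →. ℕ := fun m =>
      (kap r (projL m)).bind fun va =>
        (kap s (projR m)).map fun vb => ofL (toL va ++ toL vb) with hFdef
    have hF : Partrec F := by
      refine Partrec.bind ((kap_partrec r).comp projL_primrec.to_comp) ?_
      exact Partrec.map
        ((kap_partrec s).comp (projR_primrec.to_comp.comp Computable.fst))
        ((Primrec.encode.comp <| Primrec.list_append.comp
          ((Primrec.ofNat (List ℕ)).comp (Primrec.snd.comp Primrec.fst))
          ((Primrec.ofNat (List ℕ)).comp Primrec.snd)).to_comp.to₂)
    obtain ⟨e, he⟩ := exists_kap_eq (Partrec.nat_iff.mp hF)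
    refine ⟨e, fun x n => ⟨fun hn => ?_, fun hn => ?_⟩⟩
    · -- potential case
      obtain ⟨va, hva_mem, hva⟩ := (hr x (projL n)).1 (projL_mem_bang hn)
      obtain ⟨vb, hvb_mem, hvb⟩ := (hs x (projR n)).1 (projR_mem_bang hn)
      refine ⟨ofL (toL va ++ toL vb), ?_, ?_⟩
      · rw [he]
        exact Part.mem_bind_iff.mpr ⟨va, hva_mem,
          (Part.mem_map_iff _).mpr ⟨vb, hvb_mem, rfl⟩⟩
      · intro y hy
        rw [toL_ofL] at hy
        rcases List.mem_append.mp hy with h | h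
        · exact hva y h
        · exact hvb y h
    · -- actual case
      obtain ⟨hbang, hcase⟩ := hn
      obtain ⟨va, hva_mem, hva⟩ := (hr x (projL n)).1 (projL_mem_bang hbang)
      obtain ⟨vb, hvb_mem, hvb⟩ := (hs x (projR n)).1 (projR_mem_bang hbang)
      have hw_mem : ofL (toL va ++ toL vb) ∈ kap e n := by
        rw [he]
        exact Part.mem_bind_iff.mpr ⟨va, hva_mem,
          (Part.mem_map_iff _).mpr ⟨vb, hvb_mem, rfl⟩⟩
      have hw_bang : ofL (toL va ++ toL vb) ∈ bang (ρ x).pot := by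
        intro y hy
        rw [toL_ofL] at hy
        rcases List.mem_append.mp hy with h | h
        · exact hva y h
        · exact hvb y h
      refine ⟨ofL (toL va ++ toL vb), hw_mem, ?_⟩
      rcases hcase with h | h
      · obtain ⟨va', hva'_mem, hva'⟩ := (hr x (projL n)).2 h
        have : va' = va := Part.mem_unique hva'_mem hva_mem
        subst this
        exact (hρ x).2 va' hva' _ hw_bang (by
          intro y hy; rw [toL_ofL]; exact List.mem_append.mpr (Or.inl hy))
      · obtain ⟨vb', hvb'_mem, hvb'⟩ := (hs x (projR n)).2 h
        have : vb' = vb := Part.mem_unique hvb'_mem hvb_mem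
        subst this
        exact (hρ x).2 vb' hvb' _ hw_bang (by
          intro y hy; rw [toL_ofL]; exact List.mem_append.mpr (Or.inr hy))

end Herbrand
end

section
/- The category HAsm of Herbrand assemblies over K₁ has all finite colimits; moreover, binary coproducts and coequalizers in HAsm are stable under pullback (pulling back a binary coproduct cocone, respectively a coequalizer diagram, along any morphism again yields a binary coproduct cocone, respectively a coequalizer diagram). -/
open CategoryTheory Encodable Denumerable

namespace Herbrand

/-- A Herbrand assembly over `K₁`. -/
structure HAsmObj where
  carrier : Type
  real : Set ℕ
  rz : carrier → Set ℕ
  rz_sub : ∀ a, rz a ⊆ bang real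
  rz_ne : ∀ a, (rz a).Nonempty
  rz_up : ∀ a, UpwardClosedIn real (rz a)

/-- `r ∈ ℕ` tracks the function `f` between the underlying sets of two Herbrand assemblies. -/
def Tracks (B A : HAsmObj) (f : B.carrier → A.carrier) (r : ℕ) : Prop :=
  (∀ m ∈ bang B.real, kapIn r m (bang A.real)) ∧
  ∀ b : B.carrier, ∀ m ∈ B.rz b, kapIn r m (A.rz (f b))

/-- A morphism of Herbrand assemblies: a tracked function. -/
structure HHom (B A : HAsmObj) where
  toFun : B.carrier → A.carrier
  tracked : ∃ r, Tracks B A toFun r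

theorem HHom.ext' {B A : HAsmObj} {f g : HHom B A} (h : f.toFun = g.toFun) : f = g := by
  cases f; cases g; simpa using h

theorem tracks_id_fun (B A : HAsmObj) (f : B.carrier → A.carrier)
    (h1 : ∀ m ∈ bang B.real, m ∈ bang A.real)
    (h2 : ∀ b : B.carrier, ∀ m ∈ B.rz b, m ∈ A.rz (f b)) : ∃ r, Tracks B A f r := by
  obtain ⟨e, he⟩ := exists_kap_eq (Nat.Partrec.of_primrec Nat.Primrec.id)
  exact ⟨e, fun m hm => ⟨m, by simp [he], h1 m hm⟩,
    fun b m hm => ⟨m, by simp [he], h2 b m hm⟩⟩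

theorem tracked_id (A : HAsmObj) : ∃ r, Tracks A A id r :=
  tracks_id_fun A A id (fun _ h => h) (fun _ _ h => h)

theorem tracked_comp {C B A : HAsmObj} {f : C.carrier → B.carrier} {g : B.carrier → A.carrier}
    (hf : ∃ r, Tracks C B f r) (hg : ∃ s, Tracks B A g s) : ∃ t, Tracks C A (g ∘ f) t := by
  obtain ⟨r, hr1, hr2⟩ := hf
  obtain ⟨s, hs1, hs2⟩ := hg
  refine ⟨encode (Nat.Partrec.Code.comp (ofNat Nat.Partrec.Code s) (ofNat Nat.Partrec.Code r)),
    ?_, ?_⟩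
  · intro m hm
    obtain ⟨v, hv, hv'⟩ := hr1 m hm
    obtain ⟨w, hw, hw'⟩ := hs1 v hv'
    exact ⟨w, by simp only [kap, Nat.Partrec.Code.eval, ofNat_encode]; exact Part.mem_bind_iff.mpr ⟨v, hv, hw⟩, hw'⟩
  · intro c m hm
    obtain ⟨v, hv, hv'⟩ := hr2 c m hm
    obtain ⟨w, hw, hw'⟩ := hs2 (f c) v hv'
    exact ⟨w, by simp only [kap, Nat.Partrec.Code.eval, ofNat_encode]; exact Part.mem_bind_iff.mpr ⟨v, hv, hw⟩, hw'⟩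

/-- The category `HAsm` of Herbrand assemblies over `K₁`. -/
instance : Category HAsmObj where
  Hom B A := HHom B A
  id A := ⟨id, tracked_id A⟩
  comp f g := ⟨g.toFun ∘ f.toFun, tracked_comp f.tracked g.tracked⟩
  id_comp f := HHom.ext' rfl
  comp_id f := HHom.ext' rfl
  assoc f g h := HHom.ext' rfl


/-- The Herbrand assembly `∇X = (X, ℕ, x ↦ !ℕ)`. -/
def nablaObj (X : Type) : HAsmObj where
  carrier := X
  real := Set.univ
  rz _ := bang Set.univ
  rz_sub _ := fun _ h => h
  rz_ne _ := ⟨0, mem_bang_univ 0⟩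
  rz_up _ := fun _ _ n hn _ => hn

/-- The functor `∇ : Set → HAsm`. -/
def Nabla : Type ⥤ HAsmObj where
  obj := nablaObj
  map f := ⟨f, tracks_id_fun _ _ f (fun _ h => h) (fun _ _ h => h)⟩
  map_id _ := HHom.ext' rfl
  map_comp _ _ := HHom.ext' rfl

/-- The underlying-set functor `Γ : HAsm → Set`. -/
def Gamma : HAsmObj ⥤ Type where
  obj A := A.carrier
  map f := TypeCat.ofHom f.toFun

/-- The realizability structure of the natural numbers object: `ν n = ↑_{!ℕ} {⟨n⟩}`. -/
def nuN (n : ℕ) : Set ℕ := upClo Set.univ {ofL [n]}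

/-- The natural numbers object `N = (ℕ, ℕ, ν)` of `HAsm`. -/
def NObj : HAsmObj where
  carrier := ℕ
  real := Set.univ
  rz := nuN
  rz_sub _ := fun _ hm => hm.1
  rz_ne n := ⟨ofL [n], mem_bang_univ _, ofL [n], rfl, sle_refl _⟩
  rz_up _ := fun m hm k hk hmk => ⟨hk, hm.2.choose, hm.2.choose_spec.1,
    sle_trans hm.2.choose_spec.2 hmk⟩

/-- The terminal object `1 = ({*}, ℕ, * ↦ !ℕ)` of `HAsm`. -/
def oneObj : HAsmObj := nablaObj PUnit

/-- The zero morphism `0 : 1 ⟶ N`. -/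
def zeroH : oneObj ⟶ NObj := by
  refine ⟨fun _ => (0 : ℕ), ?_⟩
  obtain ⟨e, he⟩ := exists_kap_eq (Nat.Partrec.of_primrec (Nat.Primrec.const (ofL [0])))
  exact ⟨e, fun m _ => ⟨ofL [0], by simp [he], mem_bang_univ _⟩,
    fun b m _ => ⟨ofL [0], by simp [he], mem_bang_univ _, ofL [0], rfl, sle_refl _⟩⟩

/-- The successor morphism `s : N ⟶ N`. -/
def succH : NObj ⟶ NObj := by
  refine ⟨(Nat.succ : ℕ → ℕ), ?_⟩
  have hp : Primrec (fun m : ℕ => ofL ((toL m).map Nat.succ)) :=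
    Primrec.encode.comp ((Primrec.ofNat (List ℕ)).list_map
      ((Primrec.succ.comp Primrec.snd).to₂))
  obtain ⟨e, he⟩ := exists_kap_eq (Nat.Partrec.of_primrec (Primrec.nat_iff.mp hp))
  refine ⟨e, fun m _ => ⟨ofL ((toL m).map Nat.succ), by simp [he], mem_bang_univ _⟩, ?_⟩
  rintro (n : ℕ) m hm
  refine ⟨ofL ((toL m).map Nat.succ), by simp [he], mem_bang_univ _, ofL [n + 1], rfl, ?_⟩
  intro x hx
  have hn : n ∈ toL m := hm.2.choose_spec.2 n (by
    have : hm.2.choose = ofL [n] := hm.2.choose_spec.1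
    rw [this]; simp)
  have hx' : x = n + 1 := by simpa using hx
  subst hx'
  simp only [toL_ofL, List.mem_map]
  exact ⟨n, hn, rfl⟩



/-!
Colimits are computed on underlying sets: realizers of a coproduct element are lists tagged by
parity, those of a class in a coequalizer are the realizers of its representatives.
Stability under pullback is then a tracking problem. Comparing a pullback with the canonical one,
whose realizers are tagged pairs, shows that a realizer `m` of `p ∈ C'`, paired with the realizer
`f · m` of its image, computes a realizer of the element over `p` of a pulled-back leg, hence of
the value of the descended map at `p`. For coproducts both branches are run and their outputs
concatenated, which upward closure allows; for coequalizers the descended map is well defined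
because every generating identification `f x ~ g x` lifts along the pullback.
-/
open CategoryTheory.Limits

lemma HHom.congr_toFun {B A : HAsmObj} {f g : B ⟶ A} (h : f = g) (b : B.carrier) :
    f.toFun b = g.toFun b := by
  rw [h]

@[simp] lemma comp_toFun {C B A : HAsmObj} (f : C ⟶ B) (g : B ⟶ A) (c : C.carrier) :
    (f ≫ g).toFun c = g.toFun (f.toFun c) := rfl

section ListCodes

def mapCode (φ : ℕ → ℕ) (n : ℕ) : ℕ := ofL ((toL n).map φ)

def filterMapCode (φ : ℕ → Option ℕ) (n : ℕ) : ℕ := ofL ((toL n).filterMap φ)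

def appendCode (m n : ℕ) : ℕ := ofL (toL m ++ toL n)

variable {A B : Set ℕ} {m n : ℕ}

lemma mapCode_mem_bang {φ : ℕ → ℕ} (hφ : Set.MapsTo φ A B) (hn : n ∈ bang A) :
    mapCode φ n ∈ bang B := by
  intro x hx
  simp only [mapCode, toL_ofL, List.mem_map] at hx
  obtain ⟨t, ht, rfl⟩ := hx
  exact hφ (hn t ht)

lemma filterMapCode_mem_bang {φ : ℕ → Option ℕ} (hφ : ∀ t ∈ A, ∀ s ∈ φ t, s ∈ B)
    (hn : n ∈ bang A) : filterMapCode φ n ∈ bang B := by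
  intro x hx
  simp only [filterMapCode, toL_ofL, List.mem_filterMap] at hx
  obtain ⟨t, ht, hx⟩ := hx
  exact hφ t (hn t ht) x hx

lemma sle_filterMapCode {φ : ℕ → Option ℕ} {ψ : ℕ → ℕ} (hφψ : ∀ t, φ (ψ t) = some t)
    (h : sle (mapCode ψ m) n) : sle m (filterMapCode φ n) := by
  intro x hx
  have hψx : ψ x ∈ toL n := h _ (by simpa [mapCode] using ⟨x, hx, rfl⟩)
  simp only [filterMapCode, toL_ofL, List.mem_filterMap]
  exact ⟨ψ x, hψx, hφψ x⟩

lemma appendCode_mem_bang (hm : m ∈ bang A) (hn : n ∈ bang A) : appendCode m n ∈ bang A := by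
  intro x hx
  simp only [appendCode, toL_ofL, List.mem_append] at hx
  exact hx.elim (hm x) (hn x)

lemma sle_appendCode_left : sle m (appendCode m n) := by
  intro x hx
  simp [appendCode, hx]

lemma sle_appendCode_right : sle n (appendCode m n) := by
  intro x hx
  simp [appendCode, hx]

lemma computable_mapCode {φ : ℕ → ℕ} (hφ : Primrec φ) : Computable (mapCode φ) :=
  (Primrec.encode.comp ((Primrec.ofNat (List ℕ)).list_map ((hφ.comp Primrec.snd).to₂))).to_comp

lemma computable_filterMapCode {φ : ℕ → Option ℕ} (hφ : Primrec φ) :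
    Computable (filterMapCode φ) :=
  (Primrec.encode.comp
    (Primrec.listFilterMap (Primrec.ofNat (List ℕ)) ((hφ.comp Primrec.snd).to₂))).to_comp

lemma computable₂_appendCode : Computable₂ appendCode :=
  (Primrec.encode.comp (Primrec.list_append.comp
    ((Primrec.ofNat (List ℕ)).comp Primrec.fst)
    ((Primrec.ofNat (List ℕ)).comp Primrec.snd))).to_comp.to₂

end ListCodes

section Tagging

def sumReal (A B : Set ℕ) : Set ℕ := (fun t => 2 * t) '' A ∪ (fun t => 2 * t + 1) '' B

def tagL : ℕ → ℕ := mapCode fun t => 2 * t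

def tagR : ℕ → ℕ := mapCode fun t => 2 * t + 1

def untagOpt (i t : ℕ) : Option ℕ := if t % 2 = i then some (t / 2) else none

def untagL : ℕ → ℕ := filterMapCode (untagOpt 0)

def untagR : ℕ → ℕ := filterMapCode (untagOpt 1)

def pairCode (m n : ℕ) : ℕ := appendCode (tagL m) (tagR n)

variable {A B : Set ℕ} {m n : ℕ}

lemma tagL_mem_bang (hm : m ∈ bang A) : tagL m ∈ bang (sumReal A B) :=
  mapCode_mem_bang (fun _ ht => Or.inl ⟨_, ht, rfl⟩) hm

lemma tagR_mem_bang (hn : n ∈ bang B) : tagR n ∈ bang (sumReal A B) :=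
  mapCode_mem_bang (fun _ ht => Or.inr ⟨_, ht, rfl⟩) hn

lemma pairCode_mem_bang (hm : m ∈ bang A) (hn : n ∈ bang B) :
    pairCode m n ∈ bang (sumReal A B) :=
  appendCode_mem_bang (tagL_mem_bang hm) (tagR_mem_bang hn)

lemma untagL_mem_bang (hn : n ∈ bang (sumReal A B)) : untagL n ∈ bang A := by
  refine filterMapCode_mem_bang ?_ hn
  rintro _ (⟨a, ha, rfl⟩ | ⟨b, -, rfl⟩) s hs
  · obtain rfl : a = s := by simpa [untagOpt] using hs
    exact ha
  · simp [untagOpt] at hs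

lemma untagR_mem_bang (hn : n ∈ bang (sumReal A B)) : untagR n ∈ bang B := by
  refine filterMapCode_mem_bang ?_ hn
  rintro _ (⟨a, -, rfl⟩ | ⟨b, hb, rfl⟩) s hs
  · simp [untagOpt] at hs
  · obtain rfl : b = s := by simp [untagOpt] at hs; omega
    exact hb

lemma sle_untagL (h : sle (tagL m) n) : sle m (untagL n) :=
  sle_filterMapCode (fun t => by simp [untagOpt]) h

lemma sle_untagR (h : sle (tagR m) n) : sle m (untagR n) :=
  sle_filterMapCode (fun t => by simp [untagOpt]; omega) h

lemma sle_untagL_pairCode {k : ℕ} (h : sle (pairCode m k) n) : sle m (untagL n) :=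
  sle_untagL (sle_trans sle_appendCode_left h)

lemma sle_untagR_pairCode {k : ℕ} (h : sle (pairCode k m) n) : sle m (untagR n) :=
  sle_untagR (sle_trans sle_appendCode_right h)

lemma primrec_untagOpt (i : ℕ) : Primrec (untagOpt i) :=
  Primrec.ite (PrimrecRel.comp Primrec.eq (Primrec.nat_mod.comp Primrec.id (Primrec.const 2))
      (Primrec.const i))
    (Primrec.option_some.comp (Primrec.nat_div.comp Primrec.id (Primrec.const 2)))
    (Primrec.const none)

lemma computable_tagL : Computable tagL :=
  computable_mapCode (Primrec.nat_mul.comp (Primrec.const 2) Primrec.id)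

lemma computable_untagL : Computable untagL := computable_filterMapCode (primrec_untagOpt 0)

lemma computable_untagR : Computable untagR := computable_filterMapCode (primrec_untagOpt 1)

lemma computable_tagR : Computable tagR :=
  computable_mapCode (Primrec.succ.comp (Primrec.nat_mul.comp (Primrec.const 2) Primrec.id))

lemma computable₂_pairCode : Computable₂ pairCode :=
  computable₂_appendCode.comp (computable_tagL.comp Computable.fst)
    (computable_tagR.comp Computable.snd)

end Tagging

lemma partrec_kap (e : ℕ) : Partrec (kap e) :=
  Partrec.nat_iff.mpr (Nat.Partrec.Code.exists_code.mpr ⟨ofNat Nat.Partrec.Code e, rfl⟩)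

theorem tracks_of_partrec {B A : HAsmObj} {f : B.carrier → A.carrier} {F : ℕ →. ℕ}
    (hF : Partrec F) (h₁ : ∀ m ∈ bang B.real, ∃ v ∈ F m, v ∈ bang A.real)
    (h₂ : ∀ b, ∀ m ∈ B.rz b, ∃ v ∈ F m, v ∈ A.rz (f b)) : ∃ r, Tracks B A f r := by
  obtain ⟨e, he⟩ := exists_kap_eq (Partrec.nat_iff.mp hF)
  exact ⟨e, fun m hm => by rw [kapIn, he]; exact h₁ m hm,
    fun b m hm => by rw [kapIn, he]; exact h₂ b m hm⟩

theorem tracks_of_computable {B A : HAsmObj} {f : B.carrier → A.carrier} {φ : ℕ → ℕ}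
    (hφ : Computable φ) (h₁ : ∀ m ∈ bang B.real, φ m ∈ bang A.real)
    (h₂ : ∀ b, ∀ m ∈ B.rz b, φ m ∈ A.rz (f b)) : ∃ r, Tracks B A f r :=
  tracks_of_partrec (F := fun m => Part.some (φ m)) hφ
    (fun m hm => ⟨_, Part.mem_some _, h₁ m hm⟩) (fun b m hm => ⟨_, Part.mem_some _, h₂ b m hm⟩)

section Generated

variable {R S : Set ℕ}

lemma upClo_subset_bang : upClo R S ⊆ bang R := fun _ hn => hn.1

lemma subset_upClo (hS : S ⊆ bang R) : S ⊆ upClo R S := fun m hm => ⟨hS hm, m, hm, sle_refl m⟩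

lemma upwardClosedIn_upClo : UpwardClosedIn R (upClo R S) := by
  rintro m ⟨-, m₀, hm₀, hle⟩ n hn hmn
  exact ⟨hn, m₀, hm₀, sle_trans hle hmn⟩

def HAsmObj.ofGenerators (X : Type) (R : Set ℕ) (G : X → Set ℕ) (hG : ∀ x, G x ⊆ bang R)
    (hne : ∀ x, (G x).Nonempty) : HAsmObj where
  carrier := X
  real := R
  rz x := upClo R (G x)
  rz_sub _ := upClo_subset_bang
  rz_ne x := (hne x).mono (subset_upClo (hG x))
  rz_up _ := upwardClosedIn_upClo

lemma HAsmObj.mem_ofGenerators_rz {X : Type} {G : X → Set ℕ} {hG : ∀ x, G x ⊆ bang R}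
    {hne : ∀ x, (G x).Nonempty} {x : X} {m : ℕ} (hm : m ∈ G x) :
    m ∈ (HAsmObj.ofGenerators X R G hG hne).rz x :=
  subset_upClo (hG x) hm

end Generated

section Points

def point (A : HAsmObj) (a : A.carrier) : oneObj ⟶ A where
  toFun _ := a
  tracked := by
    obtain ⟨m, hm⟩ := A.rz_ne a
    exact tracks_of_computable (Computable.const m) (fun _ _ => A.rz_sub a hm) fun _ _ _ => hm

lemma point_comp {A B : HAsmObj} (a : A.carrier) (f : A ⟶ B) :
    point A a ≫ f = point B (f.toFun a) := HHom.ext' rfl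

lemma point_injective (A : HAsmObj) : Function.Injective (point A) :=
  fun _ _ h => HHom.congr_toFun h PUnit.unit

end Points

section CanonicalPullback

variable {B A D : HAsmObj} (g : B ⟶ D) (h : A ⟶ D)

def pullbackObj : HAsmObj :=
  HAsmObj.ofGenerators {z : B.carrier × A.carrier // g.toFun z.1 = h.toFun z.2}
    (sumReal B.real A.real) (fun z => Set.image2 pairCode (B.rz z.1.1) (A.rz z.1.2))
    (by
      rintro z _ ⟨m, hm, n, hn, rfl⟩
      exact pairCode_mem_bang (B.rz_sub _ hm) (A.rz_sub _ hn))
    (fun z => (B.rz_ne _).image2 (A.rz_ne _))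

def pullbackFst : pullbackObj g h ⟶ B where
  toFun z := z.1.1
  tracked := by
    refine tracks_of_computable computable_untagL (fun _ => untagL_mem_bang) ?_
    rintro z n ⟨hn, _, ⟨m, hm, k, -, rfl⟩, hle⟩
    exact B.rz_up _ m hm _ (untagL_mem_bang hn) (sle_untagL_pairCode hle)

def pullbackSnd : pullbackObj g h ⟶ A where
  toFun z := z.1.2
  tracked := by
    refine tracks_of_computable computable_untagR (fun _ => untagR_mem_bang) ?_
    rintro z n ⟨hn, _, ⟨m, -, k, hk, rfl⟩, hle⟩
    exact A.rz_up _ k hk _ (untagR_mem_bang hn) (sle_untagR_pairCode hle)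

lemma pullbackFst_comp : pullbackFst g h ≫ g = pullbackSnd g h ≫ h :=
  HHom.ext' (funext fun z => z.2)

end CanonicalPullback

section PullbackElem

variable {W B A D T : HAsmObj} {p₁ : W ⟶ B} {p₂ : W ⟶ A} {g : B ⟶ D} {h : A ⟶ D}
  (H : IsPullback p₁ p₂ g h)

noncomputable def pullbackElem (b : B.carrier) (a : A.carrier) (hba : g.toFun b = h.toFun a) :
    W.carrier :=
  (H.lift (pullbackFst g h) (pullbackSnd g h) (pullbackFst_comp g h)).toFun ⟨(b, a), hba⟩

variable {b : B.carrier} {a : A.carrier} (hba : g.toFun b = h.toFun a)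

@[simp] lemma fst_pullbackElem : p₁.toFun (pullbackElem H b a hba) = b :=
  HHom.congr_toFun (H.lift_fst (pullbackFst g h) (pullbackSnd g h) (pullbackFst_comp g h))
    (⟨(b, a), hba⟩ : (pullbackObj g h).carrier)

@[simp] lemma snd_pullbackElem : p₂.toFun (pullbackElem H b a hba) = a :=
  HHom.congr_toFun (H.lift_snd (pullbackFst g h) (pullbackSnd g h) (pullbackFst_comp g h))
    (⟨(b, a), hba⟩ : (pullbackObj g h).carrier)

lemma eq_pullbackElem {w : W.carrier} (h₁ : p₁.toFun w = b) (h₂ : p₂.toFun w = a) :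
    w = pullbackElem H b a hba := by
  refine point_injective W (H.hom_ext ?_ ?_) <;>
    simp only [point_comp, fst_pullbackElem, snd_pullbackElem, h₁, h₂]

lemma pullbackElem_fst_snd (w : W.carrier) :
    pullbackElem H (p₁.toFun w) (p₂.toFun w) (HHom.congr_toFun H.w w) = w :=
  (eq_pullbackElem H _ rfl rfl).symm

theorem exists_tracks_pullbackElem (k : W ⟶ T) :
    ∃ r, (∀ m ∈ bang B.real, ∀ n ∈ bang A.real, kapIn r (pairCode m n) (bang T.real)) ∧
      ∀ b a (hba : g.toFun b = h.toFun a), ∀ m ∈ B.rz b, ∀ n ∈ A.rz a,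
        kapIn r (pairCode m n) (T.rz (k.toFun (pullbackElem H b a hba))) := by
  obtain ⟨r, hbang, hrz⟩ :=
    (H.lift (pullbackFst g h) (pullbackSnd g h) (pullbackFst_comp g h) ≫ k).tracked
  refine ⟨r, fun m hm n hn => hbang _ (pairCode_mem_bang hm hn), fun b a hba m hm n hn => ?_⟩
  exact hrz ⟨(b, a), hba⟩ _ (HAsmObj.mem_ofGenerators_rz (Set.mem_image2_of_mem hm hn))

end PullbackElem

lemma nonempty_isColimit_of_isUniversalColimit {J C : Type*} [Category J] [Category C]
    {F : J ⥤ C} {c : Cocone F} (hc : IsUniversalColimit c) : Nonempty (IsColimit c) :=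
  hc c (𝟙 F) (𝟙 c.pt) (by simp) (NatTrans.Equifibered.of_isIso _)
    fun _ => IsPullback.of_id_snd

lemma isUniversalColimit_of_isColimit {J C : Type*} [Category J] [Category C] {F : J ⥤ C}
    {c d : Cocone F} (hc : IsUniversalColimit c) (hd : IsColimit d) : IsUniversalColimit d :=
  hc.of_iso ((nonempty_isColimit_of_isUniversalColimit hc).some.uniqueUpToIso hd)

section Coproduct

variable (X Y : HAsmObj)

def coprod : HAsmObj :=
  HAsmObj.ofGenerators (X.carrier ⊕ Y.carrier) (sumReal X.real Y.real)
    (Sum.elim (fun x => tagL '' X.rz x) (fun y => tagR '' Y.rz y))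
    (by
      rintro (x | y) _ ⟨m, hm, rfl⟩
      exacts [tagL_mem_bang (X.rz_sub x hm), tagR_mem_bang (Y.rz_sub y hm)])
    (by rintro (x | y); exacts [(X.rz_ne x).image _, (Y.rz_ne y).image _])

def coprodInl : X ⟶ coprod X Y where
  toFun := Sum.inl
  tracked := tracks_of_computable computable_tagL (fun _ => tagL_mem_bang)
    fun _ _ hm => HAsmObj.mem_ofGenerators_rz (Set.mem_image_of_mem tagL hm)

def coprodInr : Y ⟶ coprod X Y where
  toFun := Sum.inr
  tracked := tracks_of_computable computable_tagR (fun _ => tagR_mem_bang)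
    fun _ _ hm => HAsmObj.mem_ofGenerators_rz (Set.mem_image_of_mem tagR hm)

def coprodCofan : BinaryCofan X Y := BinaryCofan.mk (coprodInl X Y) (coprodInr X Y)

variable {X Y} {n : ℕ}

lemma untagL_mem_rz {x : X.carrier} (hn : n ∈ (coprod X Y).rz (Sum.inl x)) :
    untagL n ∈ X.rz x := by
  obtain ⟨hn, _, ⟨m, hm, rfl⟩, hle⟩ := hn
  exact X.rz_up x m hm _ (untagL_mem_bang hn) (sle_untagL hle)

lemma untagR_mem_rz {y : Y.carrier} (hn : n ∈ (coprod X Y).rz (Sum.inr y)) :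
    untagR n ∈ Y.rz y := by
  obtain ⟨hn, _, ⟨m, hm, rfl⟩, hle⟩ := hn
  exact Y.rz_up y m hm _ (untagR_mem_bang hn) (sle_untagR hle)

end Coproduct

/-- Used on a coproduct realizer `rf · m`: the branch of the wrong summand still outputs a list
of realizers, which upward closure absorbs once the outputs are appended. -/
def kapCases (rf r₁ r₂ m : ℕ) : Part ℕ :=
  (kap rf m).bind fun a => (kap r₁ (pairCode m (untagL a))).bind fun v₁ =>
    (kap r₂ (pairCode m (untagR a))).map (appendCode v₁)

lemma partrec_kapCases (rf r₁ r₂ : ℕ) : Partrec (kapCases rf r₁ r₂) :=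
  (partrec_kap rf).bind <| ((partrec_kap r₁).comp (computable₂_pairCode.comp Computable.fst
    (computable_untagL.comp Computable.snd))).bind <| Partrec.map
      ((partrec_kap r₂).comp (computable₂_pairCode.comp (Computable.fst.comp Computable.fst)
        (computable_untagR.comp (Computable.snd.comp Computable.fst))))
      (computable₂_appendCode.comp₂ (Computable.snd.comp Computable.fst).to₂ Computable.snd.to₂)

lemma appendCode_mem_kapCases {rf r₁ r₂ m a v₁ v₂ : ℕ} (ha : a ∈ kap rf m)
    (h₁ : v₁ ∈ kap r₁ (pairCode m (untagL a))) (h₂ : v₂ ∈ kap r₂ (pairCode m (untagR a))) :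
    appendCode v₁ v₂ ∈ kapCases rf r₁ r₂ m :=
  Part.mem_bind_iff.2 ⟨a, ha, Part.mem_bind_iff.2 ⟨v₁, h₁, Part.mem_map _ h₂⟩⟩

section CoprodUniversal

variable {X Y X' Y' C' T : HAsmObj} {ι₁ : X' ⟶ C'} {ι₂ : Y' ⟶ C'} {u : X' ⟶ X} {v : Y' ⟶ Y}
  {f : C' ⟶ coprod X Y} (HL : IsPullback ι₁ u f (coprodInl X Y))
  (HR : IsPullback ι₂ v f (coprodInr X Y)) (s₁ : X' ⟶ T) (s₂ : Y' ⟶ T)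

noncomputable def coprodDescFun (p : C'.carrier) : T.carrier :=
  match h : f.toFun p with
  | .inl x => s₁.toFun (pullbackElem HL p x h)
  | .inr y => s₂.toFun (pullbackElem HR p y h)

variable {p : C'.carrier}

lemma coprodDescFun_of_inl {x : X.carrier} (h : f.toFun p = Sum.inl x) :
    coprodDescFun HL HR s₁ s₂ p = s₁.toFun (pullbackElem HL p x h) := by
  unfold coprodDescFun
  split
  next x' h' => obtain rfl := Sum.inl_injective (h'.symm.trans h); rfl
  next y' h' => exact absurd (h'.symm.trans h) Sum.inr_ne_inl

lemma coprodDescFun_of_inr {y : Y.carrier} (h : f.toFun p = Sum.inr y) :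
    coprodDescFun HL HR s₁ s₂ p = s₂.toFun (pullbackElem HR p y h) := by
  unfold coprodDescFun
  split
  next x' h' => exact absurd (h'.symm.trans h) Sum.inl_ne_inr
  next y' h' => obtain rfl := Sum.inr_injective (h'.symm.trans h); rfl

theorem exists_tracks_coprodDescFun : ∃ r, Tracks C' T (coprodDescFun HL HR s₁ s₂) r := by
  obtain ⟨rf, hf_bang, hf_rz⟩ := f.tracked
  obtain ⟨r₁, h₁_bang, h₁_rz⟩ := exists_tracks_pullbackElem HL s₁
  obtain ⟨r₂, h₂_bang, h₂_rz⟩ := exists_tracks_pullbackElem HR s₂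
  refine tracks_of_partrec (partrec_kapCases rf r₁ r₂) (fun m hm => ?_) (fun p m hm => ?_)
  · obtain ⟨a, ha, ha_bang⟩ := hf_bang m hm
    obtain ⟨v₁, hv₁, hv₁_bang⟩ := h₁_bang m hm _ (untagL_mem_bang ha_bang)
    obtain ⟨v₂, hv₂, hv₂_bang⟩ := h₂_bang m hm _ (untagR_mem_bang ha_bang)
    exact ⟨_, appendCode_mem_kapCases ha hv₁ hv₂, appendCode_mem_bang hv₁_bang hv₂_bang⟩
  have hm_bang := C'.rz_sub p hm
  obtain ⟨a, ha, ha_rz⟩ := hf_rz p m hm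
  have ha_bang := (coprod X Y).rz_sub _ ha_rz
  cases h : f.toFun p with
  | inl x =>
    rw [h] at ha_rz
    obtain ⟨v₁, hv₁, hv₁_rz⟩ := h₁_rz p x h m hm _ (untagL_mem_rz ha_rz)
    obtain ⟨v₂, hv₂, hv₂_bang⟩ := h₂_bang m hm_bang _ (untagR_mem_bang ha_bang)
    refine ⟨_, appendCode_mem_kapCases ha hv₁ hv₂, ?_⟩
    rw [coprodDescFun_of_inl HL HR s₁ s₂ h]
    exact T.rz_up _ _ hv₁_rz _ (appendCode_mem_bang (T.rz_sub _ hv₁_rz) hv₂_bang)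
      sle_appendCode_left
  | inr y =>
    rw [h] at ha_rz
    obtain ⟨v₁, hv₁, hv₁_bang⟩ := h₁_bang m hm_bang _ (untagL_mem_bang ha_bang)
    obtain ⟨v₂, hv₂, hv₂_rz⟩ := h₂_rz p y h m hm _ (untagR_mem_rz ha_rz)
    refine ⟨_, appendCode_mem_kapCases ha hv₁ hv₂, ?_⟩
    rw [coprodDescFun_of_inr HL HR s₁ s₂ h]
    exact T.rz_up _ _ hv₂_rz _ (appendCode_mem_bang hv₁_bang (T.rz_sub _ hv₂_rz))
      sle_appendCode_right

noncomputable def coprodDesc : C' ⟶ T :=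
  ⟨coprodDescFun HL HR s₁ s₂, exists_tracks_coprodDescFun HL HR s₁ s₂⟩

lemma inl_coprodDesc : ι₁ ≫ coprodDesc HL HR s₁ s₂ = s₁ :=
  HHom.ext' <| funext fun x' =>
    (coprodDescFun_of_inl HL HR s₁ s₂ (HHom.congr_toFun HL.w x')).trans
      (congrArg s₁.toFun (pullbackElem_fst_snd HL x'))

lemma inr_coprodDesc : ι₂ ≫ coprodDesc HL HR s₁ s₂ = s₂ :=
  HHom.ext' <| funext fun y' =>
    (coprodDescFun_of_inr HL HR s₁ s₂ (HHom.congr_toFun HR.w y')).trans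
      (congrArg s₂.toFun (pullbackElem_fst_snd HR y'))

lemma coprodDesc_unique (d : C' ⟶ T) (h₁ : ι₁ ≫ d = s₁) (h₂ : ι₂ ≫ d = s₂) :
    d = coprodDesc HL HR s₁ s₂ := by
  refine HHom.ext' (funext fun p => ?_)
  cases h : f.toFun p with
  | inl x =>
    calc d.toFun p = d.toFun (ι₁.toFun (pullbackElem HL p x h)) :=
          congrArg d.toFun (fst_pullbackElem HL h).symm
      _ = coprodDescFun HL HR s₁ s₂ p := by
          rw [coprodDescFun_of_inl HL HR s₁ s₂ h, ← h₁, comp_toFun]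
  | inr y =>
    calc d.toFun p = d.toFun (ι₂.toFun (pullbackElem HR p y h)) :=
          congrArg d.toFun (fst_pullbackElem HR h).symm
      _ = coprodDescFun HL HR s₁ s₂ p := by
          rw [coprodDescFun_of_inr HL HR s₁ s₂ h, ← h₂, comp_toFun]

end CoprodUniversal

theorem isUniversalColimit_coprodCofan (X Y : HAsmObj) :
    IsUniversalColimit (coprodCofan X Y) := by
  intro F' c' α f _ _ H
  have HL := H ⟨.left⟩
  have HR := H ⟨.right⟩
  refine ⟨⟨fun s => coprodDesc HL HR (s.ι.app ⟨.left⟩) (s.ι.app ⟨.right⟩), ?_, ?_⟩⟩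
  · rintro s ⟨⟨⟩⟩
    exacts [inl_coprodDesc HL HR _ _, inr_coprodDesc HL HR _ _]
  · exact fun s d hd => coprodDesc_unique HL HR _ _ d (hd ⟨.left⟩) (hd ⟨.right⟩)

section Coequalizer

variable {X Y : HAsmObj} (f g : X ⟶ Y)

def coeqRel (y₁ y₂ : Y.carrier) : Prop := ∃ x, f.toFun x = y₁ ∧ g.toFun x = y₂

def coeq : HAsmObj where
  carrier := Quot (coeqRel f g)
  real := Y.real
  rz c := {n | ∃ y, Quot.mk _ y = c ∧ n ∈ Y.rz y}
  rz_sub _ := by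
    rintro n ⟨y, -, hn⟩
    exact Y.rz_sub y hn
  rz_ne c := by
    obtain ⟨y, rfl⟩ := Quot.exists_rep c
    obtain ⟨n, hn⟩ := Y.rz_ne y
    exact ⟨n, y, rfl, hn⟩
  rz_up _ := by
    rintro m ⟨y, hy, hm⟩ n hn hmn
    exact ⟨y, hy, Y.rz_up y m hm n hn hmn⟩

def coeqπ : Y ⟶ coeq f g :=
  ⟨Quot.mk _, tracks_id_fun _ _ _ (fun _ h => h) fun y _ hm => ⟨y, rfl, hm⟩⟩

lemma coeqπ_condition : f ≫ coeqπ f g = g ≫ coeqπ f g :=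
  HHom.ext' (funext fun x => Quot.sound ⟨x, rfl, rfl⟩)

def coeqCofork : Cofork f g := Cofork.ofπ (coeqπ f g) (coeqπ_condition f g)

end Coequalizer

section CoeqUniversal

variable {X Y X' Y' C' T : HAsmObj} {f g : X ⟶ Y} {f' g' : X' ⟶ Y'} {u : X' ⟶ X} {v : Y' ⟶ Y}
  {π' : Y' ⟶ C'} {w : C' ⟶ coeq f g} (Hπ : IsPullback π' v w (coeqπ f g))
  (Hf : IsPullback f' u v f) (hg : g' ≫ v = u ≫ g) (hπ' : f' ≫ π' = g' ≫ π')
  (t : Y' ⟶ T) (ht : f' ≫ t = g' ≫ t)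

include Hf hg hπ' ht in
/-- A generating step `f x ~ g x` lifts through the pullback `Hf` to a step `f' x' ~ g' x'`. -/
lemma eq_of_eqvGen_coeqRel {y₁ y₂ : Y.carrier} (hy : Relation.EqvGen (coeqRel f g) y₁ y₂)
    (p : C'.carrier) (h₁ : w.toFun p = (coeqπ f g).toFun y₁)
    (h₂ : w.toFun p = (coeqπ f g).toFun y₂) :
    t.toFun (pullbackElem Hπ p y₁ h₁) = t.toFun (pullbackElem Hπ p y₂ h₂) := by
  induction hy with
  | rel a b hab =>
    obtain ⟨x, rfl, rfl⟩ := hab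
    set x' := pullbackElem Hf (pullbackElem Hπ p _ h₁) x (snd_pullbackElem Hπ h₁)
    have hf' : f'.toFun x' = pullbackElem Hπ p _ h₁ := fst_pullbackElem Hf _
    have hg' : g'.toFun x' = pullbackElem Hπ p _ h₂ := by
      refine eq_pullbackElem Hπ h₂ ?_ ?_
      · rw [← comp_toFun, ← hπ', comp_toFun, hf', fst_pullbackElem]
      · rw [← comp_toFun, hg, comp_toFun, snd_pullbackElem]
    rw [← hf', ← hg', ← comp_toFun, ht, comp_toFun]
  | refl => rfl
  | symm _ _ _ ih => exact (ih h₂ h₁).symm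
  | trans _ b _ hab _ ih₁ ih₂ =>
    have hb : w.toFun p = (coeqπ f g).toFun b := h₁.trans (Quot.eqvGen_sound hab)
    exact (ih₁ h₁ hb).trans (ih₂ hb h₂)

noncomputable def coeqDescFun (p : C'.carrier) : T.carrier :=
  t.toFun (pullbackElem Hπ p _ (Quot.exists_rep (w.toFun p)).choose_spec.symm)

include Hf hg hπ' ht in
lemma coeqDescFun_eq {p : C'.carrier} {y : Y.carrier} (h : w.toFun p = (coeqπ f g).toFun y) :
    coeqDescFun Hπ t p = t.toFun (pullbackElem Hπ p y h) :=
  eq_of_eqvGen_coeqRel Hπ Hf hg hπ' t ht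
    (Quot.eqvGen_exact ((Quot.exists_rep (w.toFun p)).choose_spec.trans h)) p _ h

include Hf hg hπ' ht in
theorem exists_tracks_coeqDescFun : ∃ r, Tracks C' T (coeqDescFun Hπ t) r := by
  obtain ⟨rw', hw_bang, hw_rz⟩ := w.tracked
  obtain ⟨r, hr_bang, hr_rz⟩ := exists_tracks_pullbackElem Hπ t
  have hF : Partrec fun m => (kap rw' m).bind fun a => kap r (pairCode m a) :=
    (partrec_kap rw').bind ((partrec_kap r).comp computable₂_pairCode)
  refine tracks_of_partrec hF (fun m hm => ?_) (fun p m hm => ?_)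
  · obtain ⟨a, ha, ha_bang⟩ := hw_bang m hm
    obtain ⟨v, hv, hv_bang⟩ := hr_bang m hm a ha_bang
    exact ⟨v, Part.mem_bind_iff.2 ⟨a, ha, hv⟩, hv_bang⟩
  · obtain ⟨a, ha, y, hy, ha_rz⟩ := hw_rz p m hm
    obtain ⟨v, hv, hv_rz⟩ := hr_rz p y hy.symm m hm a ha_rz
    refine ⟨v, Part.mem_bind_iff.2 ⟨a, ha, hv⟩, ?_⟩
    rwa [coeqDescFun_eq Hπ Hf hg hπ' t ht]

noncomputable def coeqDesc : C' ⟶ T :=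
  ⟨coeqDescFun Hπ t, exists_tracks_coeqDescFun Hπ Hf hg hπ' t ht⟩

lemma π_coeqDesc : π' ≫ coeqDesc Hπ Hf hg hπ' t ht = t :=
  HHom.ext' <| funext fun y' =>
    (coeqDescFun_eq Hπ Hf hg hπ' t ht _).trans (congrArg t.toFun (pullbackElem_fst_snd Hπ y'))

lemma coeqDesc_unique (d : C' ⟶ T) (hd : π' ≫ d = t) : d = coeqDesc Hπ Hf hg hπ' t ht := by
  refine HHom.ext' (funext fun p => ?_)
  obtain ⟨y, hy⟩ := Quot.exists_rep (w.toFun p)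
  calc d.toFun p = d.toFun (π'.toFun (pullbackElem Hπ p y hy.symm)) :=
        congrArg d.toFun (fst_pullbackElem Hπ _).symm
    _ = coeqDescFun Hπ t p := by
        rw [coeqDescFun_eq Hπ Hf hg hπ' t ht hy.symm, ← hd, comp_toFun]

end CoeqUniversal

theorem isUniversalColimit_coeqCofork {X Y : HAsmObj} (f g : X ⟶ Y) :
    IsUniversalColimit (coeqCofork f g) := by
  intro F' c' α w _ hα H
  have Hπ := H .one
  have Hf := hα WalkingParallelPairHom.left
  have hg := α.naturality WalkingParallelPairHom.right
  have hπ' := (c'.w WalkingParallelPairHom.left).trans (c'.w WalkingParallelPairHom.right).symm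
  have ht (s : Cocone F') :=
    (s.w WalkingParallelPairHom.left).trans (s.w WalkingParallelPairHom.right).symm
  refine ⟨⟨fun s => coeqDesc Hπ Hf hg hπ' _ (ht s), fun s j => ?_, fun s d hd => ?_⟩⟩
  · cases j with
    | one => exact π_coeqDesc Hπ Hf hg hπ' _ (ht s)
    | zero => rw [← c'.w WalkingParallelPairHom.left, Category.assoc,
        π_coeqDesc Hπ Hf hg hπ' _ (ht s), s.w WalkingParallelPairHom.left]
  · exact coeqDesc_unique Hπ Hf hg hπ' _ (ht s) d (hd .one)

def initialObj : HAsmObj where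
  carrier := PEmpty
  real := ∅
  rz a := a.elim
  rz_sub a := a.elim
  rz_ne a := a.elim
  rz_up a := a.elim

def isInitialInitialObj : IsInitial initialObj :=
  IsInitial.ofUniqueHom
    (fun A => ⟨PEmpty.elim, tracks_of_computable (Computable.const (ofL []))
      (fun _ _ x hx => by simp at hx) fun a => a.elim⟩)
    fun _ _ => HHom.ext' (funext fun a => a.elim)

instance : HasInitial HAsmObj := isInitialInitialObj.hasInitial

instance (X Y : HAsmObj) : HasColimit (pair X Y) :=
  ⟨⟨⟨_, (nonempty_isColimit_of_isUniversalColimit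
    (isUniversalColimit_coprodCofan X Y)).some⟩⟩⟩

instance {X Y : HAsmObj} (f g : X ⟶ Y) : HasColimit (parallelPair f g) :=
  ⟨⟨⟨_, (nonempty_isColimit_of_isUniversalColimit
    (isUniversalColimit_coeqCofork f g)).some⟩⟩⟩

instance : HasBinaryCoproducts HAsmObj := hasBinaryCoproducts_of_hasColimit_pair _

instance : HasCoequalizers HAsmObj := hasCoequalizers_of_hasColimit_parallelPair _

instance : HasFiniteCoproducts HAsmObj := hasFiniteCoproducts_of_has_binary_and_initial

open CategoryTheory.Limits in
/-- `HAsm` has all finite colimits, and binary coproducts and coequalizers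
are stable under pullback (i.e. the corresponding colimit cocones are universal). -/
theorem hasm_finite_colimits_stable :
    HasFiniteColimits HAsmObj ∧
    (∀ {X Y : HAsmObj} (c : BinaryCofan X Y),
      Nonempty (IsColimit c) → IsUniversalColimit c) ∧
    (∀ {X Y : HAsmObj} (f g : X ⟶ Y) (c : Cofork f g),
      Nonempty (IsColimit c) → IsUniversalColimit c) :=
  ⟨hasFiniteColimits_of_hasCoequalizers_and_finite_coproducts,
    fun _ hc => isUniversalColimit_of_isColimit (isUniversalColimit_coprodCofan _ _) hc.some,
    fun f g _ hc => isUniversalColimit_of_isColimit (isUniversalColimit_coeqCofork f g) hc.some⟩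

end Herbrand
end
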